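/- arXiv:cs/0610062 — 3 statements merged into one kernel-verified Lean document; each statement's English description precedes it below -/
import Mathlib

section
/- Let f : ℕ → ℕ be any function satisfying: f x = x - 10 for all x > 100, and f x = f (f (x + 11)) for all x ≤ 100. Then for all x ≤ 100, f x = 91; equivalently, f coincides with the function F defined by F x = 91 if x ≤ 100 and F x = x - 10 otherwise. Moreover F is monotone. -/
/-!
Every `x ≤ 101` satisfies `f x = 91`, by induction downwards from `101 = 91 + 10`. For `x ≤ 100`
we have `f x = f (f (x + 11))`: if `x ≤ 90` the inner value is `f (x + 11) = 91` and `f 91 = 91`,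
both by induction; if `x ≥ 91` the inner value is `x + 1 > 100`, so `f x = f (x + 1) = 91`.
-/

def mc91 (x : ℕ) : ℕ := if x ≤ 100 then 91 else x - 10

theorem mc91_monotone : Monotone mc91 := by
  intro a b hab
  unfold mc91
  split_ifs <;> omega

section

variable {f : ℕ → ℕ} (h1 : ∀ x, 100 < x → f x = x - 10) (h2 : ∀ x, x ≤ 100 → f x = f (f (x + 11)))
include h1 h2

theorem apply_eq_91_of_le_101 {x : ℕ} (hx : x ≤ 101) : f x = 91 := by
  rcases hx.lt_or_eq with hx | rfl
  · rw [h2 x (by omega)]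
    by_cases hx90 : x ≤ 90
    · have inner : f (x + 11) = 91 := apply_eq_91_of_le_101 (by omega)
      rw [inner]
      exact apply_eq_91_of_le_101 (by omega)
    · rw [h1 (x + 11) (by omega), show x + 11 - 10 = x + 1 by omega]
      exact apply_eq_91_of_le_101 (by omega)
  · exact h1 101 (by omega)
termination_by 101 - x

theorem eq_mc91 : f = mc91 := by
  funext x
  unfold mc91
  split_ifs with hx
  · exact apply_eq_91_of_le_101 h1 h2 (by omega)
  · exact h1 x (by omega)

end

theorem mccarthy91 (f : ℕ → ℕ)
    (h1 : ∀ x, 100 < x → f x = x - 10)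
    (h2 : ∀ x, x ≤ 100 → f x = f (f (x + 11))) :
    (∀ x, x ≤ 100 → f x = 91) ∧
    (f = fun x => if x ≤ 100 then 91 else x - 10) ∧
    Monotone (fun x : ℕ => if x ≤ 100 then 91 else x - 10) :=
  ⟨fun _ hx => apply_eq_91_of_le_101 h1 h2 (by omega), eq_mc91 h1 h2, mc91_monotone⟩
end

section
/- Consider the free term algebra D generated by nullary constructors I and S, unary constructors E and R, and binary constructor P, together with the rewrite relation generated by (closure under contexts of) the five rules: E (R x) → R (E x); E (P x y) → P (E x) (E y); E I → R I; E S → R S; E (E x) → E x. This rewrite relation is strongly normalizing (terminating). -/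
/-- Terms representing subtyping deductions: `I` (refl), `S` (size),
`E` (expansion), `R` (reduction), `P` (product). -/
inductive Ded : Type
  | I : Ded
  | S : Ded
  | E : Ded → Ded
  | R : Ded → Ded
  | P : Ded → Ded → Ded

open Ded in
/-- The rewrite relation generated by the five expansion-elimination rules,
closed under contexts. -/
inductive DedStep : Ded → Ded → Prop
  | er (x : Ded) : DedStep (E (R x)) (R (E x))
  | ep (x y : Ded) : DedStep (E (P x y)) (P (E x) (E y))
  | ei : DedStep (E I) (R I)
  | es : DedStep (E S) (R S)
  | ee (x : Ded) : DedStep (E (E x)) (E x)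
  | congE {x y : Ded} : DedStep x y → DedStep (E x) (E y)
  | congR {x y : Ded} : DedStep x y → DedStep (R x) (R y)
  | congPL {x y : Ded} (z : Ded) : DedStep x y → DedStep (P x z) (P y z)
  | congPR {x y : Ded} (z : Ded) : DedStep x y → DedStep (P z x) (P z y)

/-!
Interpret terms in `ℕ` by `I, S ↦ 2`, `E x ↦ 2 ^ x`, `R x ↦ x + 1` and `P x y ↦ x + y + 1`.
Every interpretation is at least `2`, so `2 ^ x ≥ 4`, and with this each rule strictly decreases
the weight, e.g. `2 ^ (x + 1) = 2 ^ x + 2 ^ x > 2 ^ x + 1` and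
`2 ^ (x + y + 1) = 2 · 2 ^ x · 2 ^ y > 2 ^ x + 2 ^ y + 1`. All interpretations are strictly monotone,
so the decrease survives contexts.
-/

namespace Ded

def weight : Ded → ℕ
  | I => 2
  | S => 2
  | E x => 2 ^ weight x
  | R x => weight x + 1
  | P x y => weight x + weight y + 1

theorem two_le_weight : ∀ t : Ded, 2 ≤ weight t
  | I | S => le_rfl
  | E x => Nat.le_self_pow (by have := two_le_weight x; omega) 2
  | R x => by have := two_le_weight x; simp only [weight]; omega
  | P x y => by have := two_le_weight x; simp only [weight]; omega

theorem four_le_two_pow_weight (t : Ded) : 4 ≤ 2 ^ weight t :=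
  Nat.pow_le_pow_right two_pos (two_le_weight t)

theorem weight_lt_of_dedStep {t u : Ded} (h : DedStep t u) : weight u < weight t := by
  induction h with
  | er x =>
    have := four_le_two_pow_weight x
    simp only [weight, pow_succ]
    omega
  | ep x y =>
    have hx := four_le_two_pow_weight x
    have hy := four_le_two_pow_weight y
    simp only [weight, pow_succ, pow_add]
    nlinarith
  | ei | es => decide
  | ee x => exact Nat.pow_lt_pow_right one_lt_two Nat.lt_two_pow_self
  | congE _ ih => exact Nat.pow_lt_pow_right one_lt_two ih
  | congR _ ih | congPL _ _ ih | congPR _ _ ih => simp only [weight]; omega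

end Ded

/-- The expansion-elimination rewrite system is strongly normalizing. -/
theorem dedStep_strongly_normalizing :
    WellFounded (fun u t => DedStep t u) :=
  Subrelation.wf Ded.weight_lt_of_dedStep (measure Ded.weight).wf
end

section
/- Let the measure μ on pairs of terms of the free algebra generated by nullary I, S, unary S', L, R, and binary P, T be μ(u, v) = (size u + size v, size v) ∈ ℕ × ℕ ordered lexicographically. Then for each of the following rewrite rules, every occurrence of the binary symbol T in the right-hand side has arguments whose μ-measure is lexicographically strictly smaller than the μ-measure of the arguments of the root T of the left-hand side: T I x → x; T (S' x) y → S' (T x y); T (L x) y → L (T x y); T (R I) x → L x; T (R (S' x)) y → S' (T (R x) y); T (R (L x)) y → L (T (R x) y); T (P x y) (P z t) → P (T z x) (T y t); T (R (P x y)) (P z t) → P (T z (L x)) (T y (L t)). -/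
/-- Terms representing subtyping deductions for transitivity elimination:
`I` (refl), `S` (size, written `S'` in the statement as the unary (symb') rule
`Sd`), `L` (left), `R` (right), `P` (prod), `T` (trans). -/
inductive Trm : Type
  | I : Trm
  | S : Trm
  | S' : Trm → Trm
  | L : Trm → Trm
  | R : Trm → Trm
  | P : Trm → Trm → Trm
  | T : Trm → Trm → Trm

/-- The size of a term: the number of constructor occurrences. -/
def Trm.size : Trm → ℕ
  | Trm.I => 1
  | Trm.S => 1
  | Trm.S' x => x.size + 1
  | Trm.L x => x.size + 1
  | Trm.R x => x.size + 1
  | Trm.P x y => x.size + y.size + 1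
  | Trm.T x y => x.size + y.size + 1

/-- The measure of a pair of arguments of a `T`-node. -/
def μ (u v : Trm) : ℕ × ℕ := (u.size + v.size, v.size)

/-- Strict lexicographic order on `ℕ × ℕ`. -/
def LexLt (a b : ℕ × ℕ) : Prop := a.1 < b.1 ∨ (a.1 = b.1 ∧ a.2 < b.2)

/-! In every rule the arguments of each right-hand `T` are built from strictly fewer constructor
occurrences than those of the left-hand root, so the first component `size u + size v` of the
measure already drops; the lexicographic tie-break on `size v` is never needed. -/

theorem lexLt_of_fst_lt {a b : ℕ × ℕ} (h : a.1 < b.1) : LexLt a b :=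
  Or.inl h

theorem lexLt_μ_of_size_add_lt {u v u' v' : Trm} (h : u.size + v.size < u'.size + v'.size) :
    LexLt (μ u v) (μ u' v') :=
  lexLt_of_fst_lt h

open Trm in
/-- In each transitivity-elimination rule, every `T`-occurrence of the
right-hand side has arguments of strictly smaller measure than the arguments
of the root `T` of the left-hand side. -/
theorem trans_elim_measure_decreases :
    (∀ x y : Trm, LexLt (μ x y) (μ (S' x) y)) ∧              -- T (S' x) y → S' (T x y)
    (∀ x y : Trm, LexLt (μ x y) (μ (L x) y)) ∧               -- T (L x) y → L (T x y)
    (∀ x y : Trm, LexLt (μ (R x) y) (μ (R (S' x)) y)) ∧      -- T (R (S' x)) y → S' (T (R x) y)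
    (∀ x y : Trm, LexLt (μ (R x) y) (μ (R (L x)) y)) ∧       -- T (R (L x)) y → L (T (R x) y)
    (∀ x y z t : Trm, LexLt (μ z x) (μ (P x y) (P z t)) ∧
      LexLt (μ y t) (μ (P x y) (P z t))) ∧                   -- T (P x y) (P z t) → P (T z x) (T y t)
    (∀ x y z t : Trm, LexLt (μ z (L x)) (μ (R (P x y)) (P z t)) ∧
      LexLt (μ y (L t)) (μ (R (P x y)) (P z t))) := by       -- T (R (P x y)) (P z t) → P (T z (L x)) (T y (L t))
  refine ⟨fun x y => ?_, fun x y => ?_, fun x y => ?_, fun x y => ?_,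
    fun x y z t => ⟨?_, ?_⟩, fun x y z t => ⟨?_, ?_⟩⟩ <;>
  · apply lexLt_μ_of_size_add_lt
    simp only [Trm.size]
    omega
end
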